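/- Let a, b > 0 and q ∈ (0,1). Then for all x ∈ [0,q], B_{a,b}(x) ≤ B_{a,b}(q) (x/q)^a ((1−x)/(1−q))^{c_ℓ} with c_ℓ := a·max(b−1,0)/(a+1); and for all x ∈ [q,1], B̄_{a,b}(x) ≤ B̄_{a,b}(q) (x/q)^{c_r} ((1−x)/(1−q))^b with c_r := b·max(a−1,0)/(b+1). -/

import Mathlib

open MeasureTheory

/-- The Beta function `B(a,b) = ∫₀¹ t^{a-1} (1-t)^{b-1} dt`. -/
noncomputable def betaFn (a b : ℝ) : ℝ :=
  ∫ t in (0:ℝ)..1, t ^ (a - 1) * (1 - t) ^ (b - 1)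

/-- Density of the Beta(a,b) distribution. -/
noncomputable def betaPDF (a b t : ℝ) : ℝ :=
  if 0 < t ∧ t < 1 then (betaFn a b)⁻¹ * t ^ (a - 1) * (1 - t) ^ (b - 1) else 0

/-- Distribution function of the Beta(a,b) distribution. -/
noncomputable def betaCDF (a b x : ℝ) : ℝ := ∫ t in Set.Iic x, betaPDF a b t

/-!
Write `B = B_{a,b}` and `β = β_{a,b}`. The map `u ↦ B(u) u^{-a} (1-u)^{-c}` is nondecreasing on
`(0,1)` as soon as `u (1-u) β(u) - (a - (a+c) u) B(u) ≥ 0`. Comparing `β(t)` with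
`t^{a-1} (1-u)^{b-1} / B(a,b)` on `(0,u)` gives `a B(u) ≤ u β(u)` when `b ≤ 1`, which settles
`c = 0`, and the reverse inequality when `b ≥ 1`. In the latter case, for `c = a(b-1)/(a+1)`, the
expression vanishes at `0` and has derivative `(a+b)/(a+1) · (a B(u) - u β(u)) ≥ 0`. The right
tail is the left tail of the mirrored distribution, `1 - B_{a,b}(x) = B_{b,a}(1-x)`.
-/

open Set

section Basic

variable {a b : ℝ}

theorem integrableOn_rpow_mul_one_sub_rpow (ha : 0 < a) (hb : 0 < b) :
    IntegrableOn (fun t : ℝ => t ^ (a - 1) * (1 - t) ^ (b - 1)) (Ioo 0 1) := by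
  have h := (Complex.betaIntegral_convergent (u := a) (v := b)
    (by simpa using ha) (by simpa using hb)).norm
  rw [intervalIntegrable_iff_integrableOn_Ioc_of_le zero_le_one,
    integrableOn_Ioc_iff_integrableOn_Ioo] at h
  refine h.congr_fun (fun t ⟨ht0, ht1⟩ => ?_) measurableSet_Ioo
  beta_reduce
  have h1t : (1 - (t : ℂ)) = ((1 - t : ℝ) : ℂ) := by push_cast; ring
  rw [norm_mul, Complex.norm_cpow_eq_rpow_re_of_pos ht0, h1t,
    Complex.norm_cpow_eq_rpow_re_of_pos (sub_pos.2 ht1)]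
  simp

theorem betaFn_eq_setIntegral (a b : ℝ) :
    betaFn a b = ∫ t in Ioo 0 1, t ^ (a - 1) * (1 - t) ^ (b - 1) := by
  rw [betaFn, intervalIntegral.integral_of_le zero_le_one, integral_Ioc_eq_integral_Ioo]

theorem betaFn_pos (ha : 0 < a) (hb : 0 < b) : 0 < betaFn a b := by
  refine intervalIntegral.intervalIntegral_pos_of_pos_on
    ((intervalIntegrable_iff_integrableOn_Ioo_of_le zero_le_one).2
      (integrableOn_rpow_mul_one_sub_rpow ha hb)) (fun t ht => ?_) zero_lt_one
  have := sub_pos.2 ht.2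
  have := ht.1
  positivity

theorem betaFn_comm (a b : ℝ) : betaFn b a = betaFn a b := by
  have h := intervalIntegral.integral_comp_sub_left
    (fun t : ℝ => t ^ (a - 1) * (1 - t) ^ (b - 1)) (a := 0) (b := 1) 1
  simp only [sub_self, sub_zero, sub_sub_cancel] at h
  rw [betaFn, betaFn, ← h]
  simp only [mul_comm]

theorem betaPDF_eq_indicator (a b : ℝ) : betaPDF a b =
    (Ioo 0 1).indicator fun t => (betaFn a b)⁻¹ * (t ^ (a - 1) * (1 - t) ^ (b - 1)) := by
  ext t
  simp only [betaPDF, indicator, mem_Ioo, mul_assoc]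

theorem betaPDF_of_mem_Ioo {t : ℝ} (ht : t ∈ Ioo 0 1) :
    betaPDF a b t = (betaFn a b)⁻¹ * t ^ (a - 1) * (1 - t) ^ (b - 1) :=
  if_pos ht

theorem integrable_betaPDF (ha : 0 < a) (hb : 0 < b) : Integrable (betaPDF a b) := by
  rw [betaPDF_eq_indicator, integrable_indicator_iff measurableSet_Ioo]
  exact (integrableOn_rpow_mul_one_sub_rpow ha hb).const_mul _

theorem betaPDF_one_sub (a b t : ℝ) : betaPDF b a (1 - t) = betaPDF a b t := by
  have hmem : 1 - t ∈ Ioo (0 : ℝ) 1 ↔ t ∈ Ioo 0 1 := by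
    simp only [mem_Ioo, sub_pos, sub_lt_self_iff, and_comm]
  rw [betaPDF_eq_indicator, betaPDF_eq_indicator, betaFn_comm]
  by_cases ht : t ∈ Ioo 0 1
  · rw [indicator_of_mem (hmem.2 ht), indicator_of_mem ht, sub_sub_cancel, mul_comm (_ ^ _)]
  · rw [indicator_of_notMem (mt hmem.1 ht), indicator_of_notMem ht]

theorem betaCDF_eq_intervalIntegral (ha : 0 < a) (hb : 0 < b) (x : ℝ) :
    betaCDF a b x = ∫ t in 0..x, betaPDF a b t := by
  have hint := (integrable_betaPDF ha hb).integrableOn (s := Iic x)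
  rw [← intervalIntegral.integral_Iic_sub_Iic (integrable_betaPDF ha hb).integrableOn hint]
  have h0 : ∫ t in Iic 0, betaPDF a b t = 0 :=
    setIntegral_eq_zero_of_forall_eq_zero fun t ht =>
      by rw [betaPDF_eq_indicator, indicator_of_notMem (fun h => not_lt.2 ht h.1)]
  rw [betaCDF, h0, sub_zero]

theorem betaCDF_zero (ha : 0 < a) (hb : 0 < b) : betaCDF a b 0 = 0 := by
  rw [betaCDF_eq_intervalIntegral ha hb, intervalIntegral.integral_same]

theorem betaCDF_one (ha : 0 < a) (hb : 0 < b) : betaCDF a b 1 = 1 := by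
  rw [betaCDF_eq_intervalIntegral ha hb, intervalIntegral.integral_of_le zero_le_one,
    integral_Ioc_eq_integral_Ioo, setIntegral_congr_fun measurableSet_Ioo
      (fun t ht => by rw [betaPDF_of_mem_Ioo ht, mul_assoc]),
    integral_const_mul, ← betaFn_eq_setIntegral, inv_mul_cancel₀ (betaFn_pos ha hb).ne']

theorem continuous_betaCDF (ha : 0 < a) (hb : 0 < b) : Continuous (betaCDF a b) := by
  simp only [funext (betaCDF_eq_intervalIntegral ha hb)]
  exact intervalIntegral.continuous_primitive
    (fun _ _ => (integrable_betaPDF ha hb).intervalIntegrable) 0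

theorem continuousAt_betaPDF {x : ℝ} (hx : x ∈ Ioo 0 1) : ContinuousAt (betaPDF a b) x := by
  refine ContinuousAt.congr ?_ (Filter.eventuallyEq_of_mem (Ioo_mem_nhds hx.1 hx.2)
    fun t ht => (betaPDF_of_mem_Ioo ht).symm)
  fun_prop (disch := exact Or.inl (ne_of_gt (by linarith [hx.1, hx.2])))

theorem hasDerivAt_betaCDF (ha : 0 < a) (hb : 0 < b) {x : ℝ} (hx : x ∈ Ioo 0 1) :
    HasDerivAt (betaCDF a b) (betaPDF a b x) x := by
  simp only [funext (betaCDF_eq_intervalIntegral ha hb)]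
  refine intervalIntegral.integral_hasDerivAt_right
    (integrable_betaPDF ha hb).intervalIntegrable ?_ (continuousAt_betaPDF hx)
  exact (integrable_betaPDF ha hb).aestronglyMeasurable.stronglyMeasurableAtFilter

theorem one_sub_betaCDF (ha : 0 < a) (hb : 0 < b) (x : ℝ) :
    1 - betaCDF a b x = betaCDF b a (1 - x) := by
  have hsplit : betaCDF a b x + ∫ t in x..1, betaPDF a b t = 1 := by
    rw [betaCDF_eq_intervalIntegral ha hb, intervalIntegral.integral_add_adjacent_intervals
      (integrable_betaPDF ha hb).intervalIntegrable (integrable_betaPDF ha hb).intervalIntegrable,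
      ← betaCDF_eq_intervalIntegral ha hb, betaCDF_one ha hb]
  rw [← eq_sub_of_add_eq' hsplit, betaCDF_eq_intervalIntegral hb ha]
  simp only [← betaPDF_one_sub a b]
  rw [intervalIntegral.integral_comp_sub_left (fun t => betaPDF b a t), sub_self]

end Basic

section Comparison

variable {a b y : ℝ}

theorem mul_betaPDF_eq_integral (ha : 0 < a) (hy : y ∈ Ioo 0 1) :
    y * betaPDF a b y = a * ∫ t in 0..y, (betaFn a b)⁻¹ * (1 - y) ^ (b - 1) * t ^ (a - 1) := by
  rw [intervalIntegral.integral_const_mul, integral_rpow (Or.inl (by linarith)), sub_add_cancel,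
    Real.zero_rpow ha.ne', sub_zero, betaPDF_of_mem_Ioo hy, Real.rpow_sub_one hy.1.ne']
  have := hy.1.ne'
  field_simp

theorem intervalIntegrable_const_mul_rpow (ha : 0 < a) (C y : ℝ) :
    IntervalIntegrable (fun t : ℝ => C * t ^ (a - 1)) volume 0 y :=
  (intervalIntegral.intervalIntegrable_rpow' (by linarith)).const_mul C

theorem mul_betaPDF_le_mul_betaCDF (ha : 0 < a) (hb : 0 < b) (h1b : 1 ≤ b) (hy : y ∈ Ioo 0 1) :
    y * betaPDF a b y ≤ a * betaCDF a b y := by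
  rw [mul_betaPDF_eq_integral ha hy, betaCDF_eq_intervalIntegral ha hb]
  refine mul_le_mul_of_nonneg_left ?_ ha.le
  refine intervalIntegral.integral_mono_on_of_le_Ioo hy.1.le
    (intervalIntegrable_const_mul_rpow ha _ y) (integrable_betaPDF ha hb).intervalIntegrable
    fun t ht => ?_
  have := (betaFn_pos ha hb).le
  have := ht.1
  rw [betaPDF_of_mem_Ioo ⟨ht.1, ht.2.trans hy.2⟩, mul_right_comm]
  gcongr
  · linarith [hy.2]
  · linarith [ht.2]

theorem mul_betaCDF_le_mul_betaPDF (ha : 0 < a) (hb : 0 < b) (hb1 : b ≤ 1) (hy : y ∈ Ioo 0 1) :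
    a * betaCDF a b y ≤ y * betaPDF a b y := by
  rw [mul_betaPDF_eq_integral ha hy, betaCDF_eq_intervalIntegral ha hb]
  refine mul_le_mul_of_nonneg_left ?_ ha.le
  refine intervalIntegral.integral_mono_on_of_le_Ioo hy.1.le
    (integrable_betaPDF ha hb).intervalIntegrable (intervalIntegrable_const_mul_rpow ha _ y)
    fun t ht => ?_
  have := (betaFn_pos ha hb).le
  have := ht.1
  rw [betaPDF_of_mem_Ioo ⟨ht.1, ht.2.trans hy.2⟩, mul_right_comm _ ((1 - y) ^ _)]
  exact mul_le_mul_of_nonneg_left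
    (Real.rpow_le_rpow_of_nonpos (sub_pos.2 hy.2) (by linarith [ht.2]) (by linarith))
    (by positivity)

end Comparison

/-- Up to the factor `u ^ (-a - 1) * (1 - u) ^ (-c - 1)`, the derivative of
`u ↦ betaCDF a b u * u ^ (-a) * (1 - u) ^ (-c)`. -/
noncomputable def betaGap (a b c u : ℝ) : ℝ :=
  u * (1 - u) * betaPDF a b u - (a - (a + c) * u) * betaCDF a b u

section Gap

variable {a b u : ℝ}

theorem mul_one_sub_mul_betaPDF (hu : u ∈ Ioo 0 1) :
    u * (1 - u) * betaPDF a b u = (betaFn a b)⁻¹ * (u ^ a * (1 - u) ^ b) := by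
  have := hu.1.ne'
  have := (sub_pos.2 hu.2).ne'
  rw [betaPDF_of_mem_Ioo hu, Real.rpow_sub_one (by assumption), Real.rpow_sub_one (by assumption)]
  field_simp

theorem betaGap_nonneg_of_le_one (ha : 0 < a) (hb : 0 < b) (hb1 : b ≤ 1) (hu : u ∈ Ioo 0 1) :
    0 ≤ betaGap a b 0 u := by
  have hfactor : betaGap a b 0 u = (1 - u) * (u * betaPDF a b u - a * betaCDF a b u) := by
    rw [betaGap]; ring
  rw [hfactor]
  exact mul_nonneg (sub_nonneg.2 hu.2.le) (sub_nonneg.2 (mul_betaCDF_le_mul_betaPDF ha hb hb1 hu))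

theorem hasDerivAt_rpow_mul_rpow_sub_mul_betaCDF (ha : 0 < a) (hb : 0 < b) (c : ℝ)
    (hu : u ∈ Ioo 0 1) :
    HasDerivAt
      (fun v => (betaFn a b)⁻¹ * (v ^ a * (1 - v) ^ b) - (a - (a + c) * v) * betaCDF a b v)
      ((a + c) * betaCDF a b u - (b - c) * (u * betaPDF a b u)) u := by
  have hu0 := hu.1.ne'
  have hu1 := (sub_pos.2 hu.2).ne'
  have hpow : HasDerivAt (fun v : ℝ => v ^ a * (1 - v) ^ b)
      (a * u ^ (a - 1) * (1 - u) ^ b + u ^ a * (-1 * b * (1 - u) ^ (b - 1))) u :=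
    (Real.hasDerivAt_rpow_const (Or.inl hu0)).mul
      (((hasDerivAt_id u).const_sub 1).rpow_const (Or.inl hu1))
  have hlin : HasDerivAt (fun v : ℝ => a - (a + c) * v) (-(a + c)) u := by
    simpa using ((hasDerivAt_id u).const_mul (a + c)).const_sub a
  refine ((hpow.const_mul _).sub (hlin.mul (hasDerivAt_betaCDF ha hb hu))).congr_deriv ?_
  rw [betaPDF_of_mem_Ioo hu, Real.rpow_sub_one hu0, Real.rpow_sub_one hu1]
  field_simp
  ring

theorem betaGap_nonneg_of_one_le (ha : 0 < a) (hb : 0 < b) (h1b : 1 ≤ b) (hu : u ∈ Ioo 0 1) :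
    0 ≤ betaGap a b (a * (b - 1) / (a + 1)) u := by
  set c := a * (b - 1) / (a + 1)
  set G := fun v => (betaFn a b)⁻¹ * (v ^ a * (1 - v) ^ b) - (a - (a + c) * v) * betaCDF a b v
  have hderiv_nonneg : ∀ v ∈ Ioo (0 : ℝ) 1,
      0 ≤ (a + c) * betaCDF a b v - (b - c) * (v * betaPDF a b v) := fun v hv => by
    have hc : (a + c) * betaCDF a b v - (b - c) * (v * betaPDF a b v)
        = (a + b) / (a + 1) * (a * betaCDF a b v - v * betaPDF a b v) := by
      simp only [c]; field_simp; ring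
    rw [hc]
    exact mul_nonneg (by positivity) (sub_nonneg.2 (mul_betaPDF_le_mul_betaCDF ha hb h1b hv))
  have hcont : Continuous G := by
    have := continuous_betaCDF ha hb
    fun_prop (disch := positivity)
  have hmono : MonotoneOn G (Icc 0 1) := by
    refine monotoneOn_of_hasDerivWithinAt_nonneg (convex_Icc 0 1) hcont.continuousOn
      (f' := fun v => (a + c) * betaCDF a b v - (b - c) * (v * betaPDF a b v))
      (fun v hv => ?_) (fun v hv => ?_)
    all_goals rw [interior_Icc] at hv
    exacts [(hasDerivAt_rpow_mul_rpow_sub_mul_betaCDF ha hb c hv).hasDerivWithinAt,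
      hderiv_nonneg v hv]
  have hG0 : G 0 = 0 := by simp [G, betaCDF_zero ha hb, Real.zero_rpow ha.ne']
  have hGu : betaGap a b c u = G u := by rw [betaGap, mul_one_sub_mul_betaPDF hu]
  rw [hGu, ← hG0]
  exact hmono (left_mem_Icc.2 zero_le_one) (Ioo_subset_Icc_self hu) hu.1.le

end Gap

section Ratio

variable {a b c : ℝ}

theorem hasDerivAt_betaCDF_mul_rpow_neg (ha : 0 < a) (hb : 0 < b) (c : ℝ) {u : ℝ}
    (hu : u ∈ Ioo 0 1) :
    HasDerivAt (fun v => betaCDF a b v * v ^ (-a) * (1 - v) ^ (-c))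
      (u ^ (-a - 1) * (1 - u) ^ (-c - 1) * betaGap a b c u) u := by
  have hu0 := hu.1.ne'
  have hu1 := (sub_pos.2 hu.2).ne'
  refine (((hasDerivAt_betaCDF ha hb hu).mul (Real.hasDerivAt_rpow_const (Or.inl hu0))).mul
    (((hasDerivAt_id u).const_sub 1).rpow_const (Or.inl hu1))).congr_deriv ?_
  simp only [Pi.mul_apply, id]
  rw [betaGap, Real.rpow_sub_one hu0, Real.rpow_sub_one hu1]
  field_simp
  ring

theorem monotoneOn_betaCDF_mul_rpow_neg (ha : 0 < a) (hb : 0 < b)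
    (hgap : ∀ u ∈ Ioo 0 1, 0 ≤ betaGap a b c u) :
    MonotoneOn (fun v => betaCDF a b v * v ^ (-a) * (1 - v) ^ (-c)) (Ioo 0 1) := by
  refine monotoneOn_of_hasDerivWithinAt_nonneg (convex_Ioo 0 1)
    (f' := fun u => u ^ (-a - 1) * (1 - u) ^ (-c - 1) * betaGap a b c u)
    (fun u hu => (hasDerivAt_betaCDF_mul_rpow_neg ha hb c hu).continuousAt.continuousWithinAt)
    (fun u hu => ?_) (fun u hu => ?_)
  all_goals rw [interior_Ioo] at hu
  · exact (hasDerivAt_betaCDF_mul_rpow_neg ha hb c hu).hasDerivWithinAt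
  · exact mul_nonneg (mul_nonneg (Real.rpow_nonneg hu.1.le _)
      (Real.rpow_nonneg (sub_nonneg.2 hu.2.le) _)) (hgap u hu)

theorem betaCDF_le_of_betaGap_nonneg (ha : 0 < a) (hb : 0 < b)
    (hgap : ∀ u ∈ Ioo 0 1, 0 ≤ betaGap a b c u) {q x : ℝ} (hq : q ∈ Ioo 0 1)
    (hx : x ∈ Icc 0 q) :
    betaCDF a b x ≤ betaCDF a b q * (x / q) ^ a * ((1 - x) / (1 - q)) ^ c := by
  rcases hx.1.eq_or_lt with rfl | hx0
  · rw [betaCDF_zero ha hb, zero_div, Real.zero_rpow ha.ne', mul_zero, zero_mul]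
  set R := fun v => betaCDF a b v * v ^ (-a) * (1 - v) ^ (-c)
  have hR : R x ≤ R q :=
    monotoneOn_betaCDF_mul_rpow_neg ha hb hgap ⟨hx0, hx.2.trans_lt hq.2⟩ hq hx.2
  have hx1 : 0 < 1 - x := by linarith [hx.2, hq.2]
  have hq1 : 0 < 1 - q := sub_pos.2 hq.2
  have hq0 := hq.1
  have hFx : betaCDF a b x = R x * (x ^ a * (1 - x) ^ c) := by
    simp only [R, Real.rpow_neg hx0.le, Real.rpow_neg hx1.le]
    field_simp
  have hFq : betaCDF a b q * (x / q) ^ a * ((1 - x) / (1 - q)) ^ c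
      = R q * (x ^ a * (1 - x) ^ c) := by
    simp only [R, Real.rpow_neg hq0.le, Real.rpow_neg hq1.le, Real.div_rpow hx0.le hq0.le,
      Real.div_rpow hx1.le hq1.le]
    field_simp
  rw [hFx, hFq]
  exact mul_le_mul_of_nonneg_right hR (by positivity)

theorem betaCDF_le_betaCDF_mul_rpow (ha : 0 < a) (hb : 0 < b) {q x : ℝ} (hq : q ∈ Ioo 0 1)
    (hx : x ∈ Icc 0 q) :
    betaCDF a b x ≤
      betaCDF a b q * (x / q) ^ a * ((1 - x) / (1 - q)) ^ (a * max (b - 1) 0 / (a + 1)) := by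
  refine betaCDF_le_of_betaGap_nonneg ha hb (fun u hu => ?_) hq hx
  rcases le_total b 1 with hb1 | h1b
  · rw [max_eq_right (by linarith), mul_zero, zero_div]
    exact betaGap_nonneg_of_le_one ha hb hb1 hu
  · rw [max_eq_left (by linarith)]
    exact betaGap_nonneg_of_one_le ha hb h1b hu

end Ratio

theorem beta_tail_proposition (a b : ℝ) (ha : 0 < a) (hb : 0 < b)
    (q : ℝ) (hq : q ∈ Set.Ioo (0:ℝ) 1) :
    (∀ x ∈ Set.Icc (0:ℝ) q,
      betaCDF a b x ≤ betaCDF a b q * (x / q) ^ a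
        * ((1 - x) / (1 - q)) ^ (a * max (b - 1) 0 / (a + 1))) ∧
    (∀ x ∈ Set.Icc q (1:ℝ),
      1 - betaCDF a b x ≤ (1 - betaCDF a b q) * (x / q) ^ (b * max (a - 1) 0 / (b + 1))
        * ((1 - x) / (1 - q)) ^ b) := by
  refine ⟨fun x hx => betaCDF_le_betaCDF_mul_rpow ha hb hq hx, fun x hx => ?_⟩
  have hmirror := betaCDF_le_betaCDF_mul_rpow hb ha (q := 1 - q) (x := 1 - x)
    ⟨sub_pos.2 hq.2, sub_lt_self 1 hq.1⟩ ⟨sub_nonneg.2 hx.2, sub_le_sub_left hx.1 1⟩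
  rw [sub_sub_cancel, sub_sub_cancel] at hmirror
  rw [one_sub_betaCDF ha hb, one_sub_betaCDF ha hb, mul_right_comm]
  exact hmirror
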